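/- Let (V,E,∂) be a locally finite graph. For each e ∈ E let H¹_e be a complex Hilbert space, and for each e ∈ E and endpoint v ∈ {∂₋e,∂₊e} let G_{e,v} be a complex Hilbert space and Γ_{e,v} : H¹_e → G_{e,v} a bounded linear map, with c² := sup_{e∈E} (‖Γ_{e,∂₋e}‖² + ‖Γ_{e,∂₊e}‖²) < ∞. For each v ∈ V let G_v be a closed subspace of ⊕_{e∈E_v} G_{e,v}, and write Γ_v^{ext} f := (Γ_{e,v} f_e)_{e∈E_v} for f ∈ ⊕_{e∈E} H¹_e. Define the edge-coupled space H¹ := {f ∈ ⊕_e H¹_e : Γ_v^{ext} f ∈ G_v for all v} with norm ‖f‖_{H¹} := ‖f‖_{⊕_e H¹_e} and boundary map Γ f := (Γ_v^{ext} f)_{v∈V} ∈ ⊕_v G_v, and define the vertex-edge-coupled space H̃¹ := {(f,φ) ∈ (⊕_e H¹_e) × (⊕_v G_v) : φ_v = Γ_v^{ext} f for all v} with norm ‖(f,φ)‖²_{H̃¹} := ‖f‖²_{⊕_e H¹_e} + ‖φ‖²_{⊕_v G_v} and boundary map Γ̃(f,φ) := φ. Then U¹ : f ↦ (f, (Γ_v^{ext}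 f)_{v∈V}) is a well-defined linear bijection from H¹ onto H̃¹ satisfying ‖f‖_{H¹} ≤ ‖U¹ f‖_{H̃¹} ≤ √(1 + c²)·‖f‖_{H¹} for all f ∈ H¹, and Γ̃(U¹ f) = Γ f. In particular, the vertex-edge-coupled problem with trivial vertex building blocks is equivalent to the edge-coupled problem. -/

import Mathlib

/-!
`U¹ f = (f, Γ f)` is the graph map of the boundary operator `Γ`, so it is a linear bijection
of `H¹` onto `H̃¹` and `‖f‖ ≤ ‖U¹ f‖`. For the upper bound, `‖Γ f‖² = ∑_v ∑_{e ∈ E_v} ‖Γ_{e,v} f_e‖²`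
is regrouped edge by edge: every edge has exactly two endpoints, so it contributes
`‖Γ_{e,∂₋e} f_e‖² + ‖Γ_{e,∂₊e} f_e‖² ≤ c² ‖f_e‖²`, whence `‖Γ f‖ ≤ |c| ‖f‖`.
-/

/-- A locally finite graph: countable vertex set `V`, countable edge set `E`,
incidence map `bd e = (∂₋e, ∂₊e)`, no loops, and finitely many edges at each vertex. -/
structure LocallyFiniteGraph (V E : Type*) [Countable V] [Countable E] where
  bd : E → V × V
  no_loops : ∀ e, (bd e).1 ≠ (bd e).2
  locFin : ∀ v : V, {e : E | (bd e).1 = v ∨ (bd e).2 = v}.Finite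

/-- The collection of boundary values of `f` at a vertex `v`:
`Γ_v^{ext} f = (Γ_{e,v} f_e)_{e ∈ E_v}` as an element of the maximal vertex boundary
space `⊕_{e∈E_v} G_{e,v}` (a finite ℓ²-direct sum). -/
noncomputable def GammaExt {V E : Type*} [Countable V] [Countable E]
    (G : LocallyFiniteGraph V E)
    (H1e : E → Type*) [∀ e, NormedAddCommGroup (H1e e)] [∀ e, InnerProductSpace ℂ (H1e e)]
    [∀ e, CompleteSpace (H1e e)]
    (Gev : E → V → Type*) [∀ e v, NormedAddCommGroup (Gev e v)]
    [∀ e v, InnerProductSpace ℂ (Gev e v)]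
    (Γev : ∀ e v, H1e e →L[ℂ] Gev e v)
    (f : lp H1e 2) (v : V) :
    PiLp 2 (fun e : {e // e ∈ (G.locFin v).toFinset} => Gev e.1 v) :=
  (WithLp.equiv 2 _).symm fun e => Γev e.1 v (f e.1)

namespace lp

variable {ι : Type*} {F : ι → Type*} [∀ i, NormedAddCommGroup (F i)]

lemma sum_norm_sq_le_norm_sq (f : lp F 2) (s : Finset ι) :
    ∑ i ∈ s, ‖f i‖ ^ 2 ≤ ‖f‖ ^ 2 := by
  simpa [Real.rpow_two] using lp.sum_rpow_le_norm_rpow (p := 2) (by norm_num) f s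

lemma norm_le_of_forall_sum_norm_sq_le {f : lp F 2} {C : ℝ} (hC : 0 ≤ C)
    (hf : ∀ s : Finset ι, ∑ i ∈ s, ‖f i‖ ^ 2 ≤ C ^ 2) : ‖f‖ ≤ C :=
  lp.norm_le_of_forall_sum_le (p := 2) (by norm_num) hC (by simpa [Real.rpow_two] using hf)

end lp

lemma memℓp_two_of_forall_sum_norm_sq_le {ι : Type*} {F : ι → Type*}
    [∀ i, NormedAddCommGroup (F i)] {f : ∀ i, F i} {C : ℝ}
    (hf : ∀ s : Finset ι, ∑ i ∈ s, ‖f i‖ ^ 2 ≤ C) : Memℓp f 2 :=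
  memℓp_gen' (C := C) (by simpa [Real.rpow_two] using hf)

lemma ContinuousLinearMap.norm_apply_sq_add_norm_apply_sq_le {𝕜 E F₁ F₂ : Type*}
    [NontriviallyNormedField 𝕜] [SeminormedAddCommGroup E] [SeminormedAddCommGroup F₁]
    [SeminormedAddCommGroup F₂] [NormedSpace 𝕜 E] [NormedSpace 𝕜 F₁] [NormedSpace 𝕜 F₂]
    (T₁ : E →L[𝕜] F₁) (T₂ : E →L[𝕜] F₂) {c : ℝ} (hc : ‖T₁‖ ^ 2 + ‖T₂‖ ^ 2 ≤ c ^ 2) (x : E) :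
    ‖T₁ x‖ ^ 2 + ‖T₂ x‖ ^ 2 ≤ c ^ 2 * ‖x‖ ^ 2 :=
  calc ‖T₁ x‖ ^ 2 + ‖T₂ x‖ ^ 2 ≤ (‖T₁‖ * ‖x‖) ^ 2 + (‖T₂‖ * ‖x‖) ^ 2 := by
        gcongr <;> exact ContinuousLinearMap.le_opNorm _ _
    _ = (‖T₁‖ ^ 2 + ‖T₂‖ ^ 2) * ‖x‖ ^ 2 := by ring
    _ ≤ c ^ 2 * ‖x‖ ^ 2 := by gcongr

namespace LocallyFiniteGraph

variable {V E : Type*} [Countable V] [Countable E] (G : LocallyFiniteGraph V E)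

lemma sum_sum_incident_le [DecidableEq E] (a : E → V → ℝ) (ha : ∀ e v, 0 ≤ a e v)
    (S : Finset V) :
    ∑ v ∈ S, ∑ e ∈ (G.locFin v).toFinset, a e v ≤
      ∑ e ∈ S.biUnion fun v => (G.locFin v).toFinset, (a e (G.bd e).1 + a e (G.bd e).2) := by
  classical
  rw [Finset.sum_comm' (t' := S.biUnion fun v => (G.locFin v).toFinset)
    (s' := fun e => S.filter fun v => e ∈ (G.locFin v).toFinset)
    (by intro v e; simp only [Finset.mem_filter, Finset.mem_biUnion]; grind)]
  refine Finset.sum_le_sum fun e _ => ?_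
  rw [← Finset.sum_pair (G.no_loops e)]
  refine Finset.sum_le_sum_of_subset_of_nonneg (fun v hv => ?_) fun v _ _ => ha e v
  simp only [Finset.mem_filter, Set.Finite.mem_toFinset] at hv
  rcases hv.2 with h | h <;> simp [h]

end LocallyFiniteGraph

section EdgeCoupling

variable {V E : Type*} [Countable V] [Countable E] (G : LocallyFiniteGraph V E)
  (H1e : E → Type*) [∀ e, NormedAddCommGroup (H1e e)] [∀ e, InnerProductSpace ℂ (H1e e)]
  [∀ e, CompleteSpace (H1e e)]
  (Gev : E → V → Type*) [∀ e v, NormedAddCommGroup (Gev e v)]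
  [∀ e v, InnerProductSpace ℂ (Gev e v)]
  (Γev : ∀ e v, H1e e →L[ℂ] Gev e v)

noncomputable def gammaExtₗ (v : V) :
    lp H1e 2 →ₗ[ℂ] PiLp 2 (fun e : {e // e ∈ (G.locFin v).toFinset} => Gev e.1 v) :=
  (WithLp.linearEquiv 2 ℂ _).symm.toLinearMap ∘ₗ
    LinearMap.pi fun e => (Γev e.1 v).toLinearMap ∘ₗ lp.evalₗ H1e 2 e.1

lemma gammaExtₗ_apply (v : V) (f : lp H1e 2) :
    gammaExtₗ G H1e Gev Γev v f = GammaExt G H1e Gev Γev f v :=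
  rfl

lemma norm_gammaExt_sq (f : lp H1e 2) (v : V) :
    ‖GammaExt G H1e Gev Γev f v‖ ^ 2 = ∑ e ∈ (G.locFin v).toFinset, ‖Γev e v (f e)‖ ^ 2 := by
  rw [PiLp.norm_sq_eq_of_L2, ← Finset.sum_coe_sort _ fun e => ‖Γev e v (f e)‖ ^ 2]
  rfl

variable {G H1e Gev Γev} in
lemma sum_norm_gammaExt_sq_le {c : ℝ}
    (hc : ∀ e, ‖Γev e (G.bd e).1‖ ^ 2 + ‖Γev e (G.bd e).2‖ ^ 2 ≤ c ^ 2)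
    (f : lp H1e 2) (S : Finset V) :
    ∑ v ∈ S, ‖GammaExt G H1e Gev Γev f v‖ ^ 2 ≤ c ^ 2 * ‖f‖ ^ 2 := by
  classical
  set T := S.biUnion fun v => (G.locFin v).toFinset
  calc ∑ v ∈ S, ‖GammaExt G H1e Gev Γev f v‖ ^ 2
      = ∑ v ∈ S, ∑ e ∈ (G.locFin v).toFinset, ‖Γev e v (f e)‖ ^ 2 := by
        simp only [norm_gammaExt_sq]
    _ ≤ ∑ e ∈ T, (‖Γev e (G.bd e).1 (f e)‖ ^ 2 + ‖Γev e (G.bd e).2 (f e)‖ ^ 2) :=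
        G.sum_sum_incident_le (fun e v => ‖Γev e v (f e)‖ ^ 2) (fun _ _ => by positivity) S
    _ ≤ ∑ e ∈ T, c ^ 2 * ‖f e‖ ^ 2 :=
        Finset.sum_le_sum fun e _ =>
          ContinuousLinearMap.norm_apply_sq_add_norm_apply_sq_le _ _ (hc e) (f e)
    _ = c ^ 2 * ∑ e ∈ T, ‖f e‖ ^ 2 := (Finset.mul_sum _ _ _).symm
    _ ≤ c ^ 2 * ‖f‖ ^ 2 := by gcongr; exact lp.sum_norm_sq_le_norm_sq f T

variable (Gv : ∀ v, Submodule ℂ (PiLp 2 (fun e : {e // e ∈ (G.locFin v).toFinset} => Gev e.1 v)))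

/-- The edge-coupled space `H¹`. -/
noncomputable def edgeCoupledSpace : Submodule ℂ (lp H1e 2) :=
  ⨅ v, (Gv v).comap (gammaExtₗ G H1e Gev Γev v)

variable {G H1e Gev Γev Gv}

lemma mem_edgeCoupledSpace {f : lp H1e 2} :
    f ∈ edgeCoupledSpace G H1e Gev Γev Gv ↔ ∀ v, GammaExt G H1e Gev Γev f v ∈ Gv v := by
  simp only [edgeCoupledSpace, Submodule.mem_iInf, Submodule.mem_comap, gammaExtₗ_apply]

variable {c : ℝ} (hc : ∀ e, ‖Γev e (G.bd e).1‖ ^ 2 + ‖Γev e (G.bd e).2‖ ^ 2 ≤ c ^ 2)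

/-- The boundary map `Γ : H¹ → ⊕_v G_v`. -/
noncomputable def edgeCoupledBoundary :
    edgeCoupledSpace G H1e Gev Γev Gv →ₗ[ℂ] lp (fun v => Gv v) 2 where
  toFun f := ⟨fun v => ⟨GammaExt G H1e Gev Γev f v, mem_edgeCoupledSpace.1 f.2 v⟩,
    memℓp_two_of_forall_sum_norm_sq_le (sum_norm_gammaExt_sq_le hc f)⟩
  map_add' f g := lp.ext <| funext fun v => Subtype.ext <|
    map_add (gammaExtₗ G H1e Gev Γev v) (f : lp H1e 2) g
  map_smul' a f := lp.ext <| funext fun v => Subtype.ext <|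
    map_smul (gammaExtₗ G H1e Gev Γev v) a (f : lp H1e 2)

lemma norm_edgeCoupledBoundary_le (f : edgeCoupledSpace G H1e Gev Γev Gv) :
    ‖edgeCoupledBoundary hc f‖ ≤ |c| * ‖(f : lp H1e 2)‖ :=
  lp.norm_le_of_forall_sum_norm_sq_le (by positivity) fun S => by
    rw [mul_pow, sq_abs]
    exact sum_norm_gammaExt_sq_le hc f S

/-- The map `U¹ : H¹ → H̃¹`, `f ↦ (f, Γ f)`. -/
noncomputable def vertexEdgeCoupling :
    edgeCoupledSpace G H1e Gev Γev Gv →ₗ[ℂ] WithLp 2 (lp H1e 2 × lp (fun v => Gv v) 2) :=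
  (WithLp.linearEquiv 2 ℂ _).symm.toLinearMap ∘ₗ
    (edgeCoupledSpace G H1e Gev Γev Gv).subtype.prod (edgeCoupledBoundary hc)

lemma norm_le_norm_vertexEdgeCoupling (f : edgeCoupledSpace G H1e Gev Γev Gv) :
    ‖(f : lp H1e 2)‖ ≤ ‖vertexEdgeCoupling hc f‖ :=
  WithLp.norm_fst_le (lp H1e 2) (vertexEdgeCoupling hc f)

lemma norm_vertexEdgeCoupling_le (f : edgeCoupledSpace G H1e Gev Γev Gv) :
    ‖vertexEdgeCoupling hc f‖ ≤ Real.sqrt (1 + c ^ 2) * ‖(f : lp H1e 2)‖ := by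
  rw [← Real.sqrt_sq (norm_nonneg (f : lp H1e 2)), ← Real.sqrt_mul (by positivity),
    Real.le_sqrt (norm_nonneg _) (by positivity)]
  calc ‖vertexEdgeCoupling hc f‖ ^ 2
      = ‖(f : lp H1e 2)‖ ^ 2 + ‖edgeCoupledBoundary hc f‖ ^ 2 :=
        WithLp.prod_norm_sq_eq_of_L2 _
    _ ≤ ‖(f : lp H1e 2)‖ ^ 2 + (|c| * ‖(f : lp H1e 2)‖) ^ 2 := by
        gcongr; exact norm_edgeCoupledBoundary_le hc f
    _ = (1 + c ^ 2) * ‖(f : lp H1e 2)‖ ^ 2 := by rw [mul_pow, sq_abs]; ring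

end EdgeCoupling

theorem stmt16_general {V E : Type*} [Countable V] [Countable E]
    (G : LocallyFiniteGraph V E)
    (H1e : E → Type*) [∀ e, NormedAddCommGroup (H1e e)] [∀ e, InnerProductSpace ℂ (H1e e)]
    [∀ e, CompleteSpace (H1e e)]
    (Gev : E → V → Type*) [∀ e v, NormedAddCommGroup (Gev e v)]
    [∀ e v, InnerProductSpace ℂ (Gev e v)]
    (Γev : ∀ e v, H1e e →L[ℂ] Gev e v)
    (c : ℝ) (hc : ∀ e, ‖Γev e (G.bd e).1‖ ^ 2 + ‖Γev e (G.bd e).2‖ ^ 2 ≤ c ^ 2)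
    (Gv : ∀ v, Submodule ℂ (PiLp 2 (fun e : {e // e ∈ (G.locFin v).toFinset} => Gev e.1 v))) :
    ∃ U : lp H1e 2 → WithLp 2 ((lp H1e 2) × (lp (fun v => ↥(Gv v)) 2)),
      -- `U` is well defined on `H¹` with the right components (in particular
      -- `Γ̃(U f) = (Γ_v^{ext} f)_v = Γ f`) and satisfies the two norm bounds
      (∀ f : lp H1e 2, (∀ v, GammaExt G H1e Gev Γev f v ∈ Gv v) →
        ((WithLp.equiv 2 _) (U f)).1 = f ∧
        (∀ v, (((WithLp.equiv 2 _) (U f)).2 v :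
            PiLp 2 (fun e : {e // e ∈ (G.locFin v).toFinset} => Gev e.1 v))
          = GammaExt G H1e Gev Γev f v) ∧
        ‖f‖ ≤ ‖U f‖ ∧ ‖U f‖ ≤ Real.sqrt (1 + c ^ 2) * ‖f‖) ∧
      -- `U` maps `H¹` into `H̃¹`
      (∀ f : lp H1e 2, (∀ v, GammaExt G H1e Gev Γev f v ∈ Gv v) →
        ∀ v, (((WithLp.equiv 2 _) (U f)).2 v :
            PiLp 2 (fun e : {e // e ∈ (G.locFin v).toFinset} => Gev e.1 v))
          = GammaExt G H1e Gev Γev ((WithLp.equiv 2 _) (U f)).1 v) ∧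
      -- `U` is linear on `H¹`
      (∀ f g : lp H1e 2, (∀ v, GammaExt G H1e Gev Γev f v ∈ Gv v) →
        (∀ v, GammaExt G H1e Gev Γev g v ∈ Gv v) → U (f + g) = U f + U g) ∧
      (∀ (a : ℂ) (f : lp H1e 2), (∀ v, GammaExt G H1e Gev Γev f v ∈ Gv v) →
        U (a • f) = a • U f) ∧
      -- `U` is injective on `H¹`
      (∀ f g : lp H1e 2, (∀ v, GammaExt G H1e Gev Γev f v ∈ Gv v) →
        (∀ v, GammaExt G H1e Gev Γev g v ∈ Gv v) → U f = U g → f = g) ∧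
      -- `U` is surjective from `H¹` onto `H̃¹`
      (∀ p : WithLp 2 ((lp H1e 2) × (lp (fun v => ↥(Gv v)) 2)),
        (∀ v, (((WithLp.equiv 2 _) p).2 v :
            PiLp 2 (fun e : {e // e ∈ (G.locFin v).toFinset} => Gev e.1 v))
          = GammaExt G H1e Gev Γev ((WithLp.equiv 2 _) p).1 v) →
        ∃ f : lp H1e 2, (∀ v, GammaExt G H1e Gev Γev f v ∈ Gv v) ∧ U f = p) := by
  classical
  let U : lp H1e 2 → WithLp 2 (lp H1e 2 × lp (fun v => ↥(Gv v)) 2) := fun f =>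
    if hf : f ∈ edgeCoupledSpace G H1e Gev Γev Gv then vertexEdgeCoupling hc ⟨f, hf⟩ else 0
  have hU : ∀ f (hf : ∀ v, GammaExt G H1e Gev Γev f v ∈ Gv v),
      U f = vertexEdgeCoupling hc ⟨f, mem_edgeCoupledSpace.2 hf⟩ := fun f hf => dif_pos _
  refine ⟨U, fun f hf => ?_, fun f hf v => ?_, fun f g hf hg => ?_, fun a f hf => ?_,
    fun f g hf hg hfg => ?_, fun p hp => ?_⟩
  · rw [hU f hf]
    exact ⟨rfl, fun v => rfl, norm_le_norm_vertexEdgeCoupling hc ⟨f, _⟩,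
      norm_vertexEdgeCoupling_le hc ⟨f, _⟩⟩
  · rw [hU f hf]
    rfl
  · have hfg := add_mem (mem_edgeCoupledSpace.2 hf) (mem_edgeCoupledSpace.2 hg)
    rw [hU _ (mem_edgeCoupledSpace.1 hfg), hU f hf, hU g hg]
    exact map_add (vertexEdgeCoupling (Gv := Gv) hc) ⟨f, _⟩ ⟨g, _⟩
  · have haf := Submodule.smul_mem _ a (mem_edgeCoupledSpace.2 hf)
    rw [hU _ (mem_edgeCoupledSpace.1 haf), hU f hf]
    exact map_smul (vertexEdgeCoupling (Gv := Gv) hc) a ⟨f, _⟩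
  · rw [hU f hf, hU g hg] at hfg
    exact congrArg (fun x => x.ofLp.1) hfg
  · have hf : ∀ v, GammaExt G H1e Gev Γev p.ofLp.1 v ∈ Gv v := fun v => hp v ▸ (p.ofLp.2 v).2
    refine ⟨_, hf, ?_⟩
    rw [hU _ hf]
    exact (WithLp.equiv 2 _).injective
      (Prod.ext rfl (lp.ext (funext fun v => Subtype.ext (hp v).symm)))

/-- The vertex-edge coupling with trivial vertex building blocks is
equivalent to the edge coupling: `U¹ : f ↦ (f, (Γ_v^{ext} f)_v)` is a linear bijection
from the edge-coupled space `H¹ = {f : Γ_v^{ext} f ∈ G_v ∀v}` onto the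
vertex-edge-coupled space `H̃¹ = {(f,φ) : φ_v = Γ_v^{ext} f ∀v}` with
`‖f‖ ≤ ‖U¹f‖ ≤ √(1+c²)·‖f‖` and `Γ̃(U¹f) = Γf`. -/
theorem stmt16 {V E : Type*} [Countable V] [Countable E]
    (G : LocallyFiniteGraph V E)
    (H1e : E → Type*) [∀ e, NormedAddCommGroup (H1e e)] [∀ e, InnerProductSpace ℂ (H1e e)]
    [∀ e, CompleteSpace (H1e e)]
    (Gev : E → V → Type*) [∀ e v, NormedAddCommGroup (Gev e v)]
    [∀ e v, InnerProductSpace ℂ (Gev e v)] [∀ e v, CompleteSpace (Gev e v)]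
    (Γev : ∀ e v, H1e e →L[ℂ] Gev e v)
    (c : ℝ) (hc : ∀ e, ‖Γev e (G.bd e).1‖ ^ 2 + ‖Γev e (G.bd e).2‖ ^ 2 ≤ c ^ 2)
    (Gv : ∀ v, Submodule ℂ (PiLp 2 (fun e : {e // e ∈ (G.locFin v).toFinset} => Gev e.1 v)))
    (hGv : ∀ v, IsClosed (Gv v :
      Set (PiLp 2 (fun e : {e // e ∈ (G.locFin v).toFinset} => Gev e.1 v)))) :
    ∃ U : lp H1e 2 → WithLp 2 ((lp H1e 2) × (lp (fun v => ↥(Gv v)) 2)),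
      -- `U` is well defined on `H¹` with the right components (in particular
      -- `Γ̃(U f) = (Γ_v^{ext} f)_v = Γ f`) and satisfies the two norm bounds
      (∀ f : lp H1e 2, (∀ v, GammaExt G H1e Gev Γev f v ∈ Gv v) →
        ((WithLp.equiv 2 _) (U f)).1 = f ∧
        (∀ v, (((WithLp.equiv 2 _) (U f)).2 v :
            PiLp 2 (fun e : {e // e ∈ (G.locFin v).toFinset} => Gev e.1 v))
          = GammaExt G H1e Gev Γev f v) ∧
        ‖f‖ ≤ ‖U f‖ ∧ ‖U f‖ ≤ Real.sqrt (1 + c ^ 2) * ‖f‖) ∧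
      -- `U` maps `H¹` into `H̃¹`
      (∀ f : lp H1e 2, (∀ v, GammaExt G H1e Gev Γev f v ∈ Gv v) →
        ∀ v, (((WithLp.equiv 2 _) (U f)).2 v :
            PiLp 2 (fun e : {e // e ∈ (G.locFin v).toFinset} => Gev e.1 v))
          = GammaExt G H1e Gev Γev ((WithLp.equiv 2 _) (U f)).1 v) ∧
      -- `U` is linear on `H¹`
      (∀ f g : lp H1e 2, (∀ v, GammaExt G H1e Gev Γev f v ∈ Gv v) →
        (∀ v, GammaExt G H1e Gev Γev g v ∈ Gv v) → U (f + g) = U f + U g) ∧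
      (∀ (a : ℂ) (f : lp H1e 2), (∀ v, GammaExt G H1e Gev Γev f v ∈ Gv v) →
        U (a • f) = a • U f) ∧
      -- `U` is injective on `H¹`
      (∀ f g : lp H1e 2, (∀ v, GammaExt G H1e Gev Γev f v ∈ Gv v) →
        (∀ v, GammaExt G H1e Gev Γev g v ∈ Gv v) → U f = U g → f = g) ∧
      -- `U` is surjective from `H¹` onto `H̃¹`
      (∀ p : WithLp 2 ((lp H1e 2) × (lp (fun v => ↥(Gv v)) 2)),
        (∀ v, (((WithLp.equiv 2 _) p).2 v :
            PiLp 2 (fun e : {e // e ∈ (G.locFin v).toFinset} => Gev e.1 v))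
          = GammaExt G H1e Gev Γev ((WithLp.equiv 2 _) p).1 v) →
        ∃ f : lp H1e 2, (∀ v, GammaExt G H1e Gev Γev f v ∈ Gv v) ∧ U f = p) :=
  stmt16_general G H1e Gev Γev c hc Gv
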